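/- arXiv:1808.07159 — 5 statements merged into one kernel-verified Lean document; each statement's English description precedes it below -/
import Mathlib

section
/- For all elements x, y of the dual real number algebra ℝ^(2), the norm ‖·‖ is submultiplicative: ‖x·y‖ ≤ ‖x‖·‖y‖, where x·y is the dual number product. -/
open TrivSqZeroExt

noncomputable section

/-- The dual real number algebra `ℝ^(2)` (Mathlib's `DualNumber ℝ`). -/
abbrev D2 : Type := DualNumber ℝ

/-- The norm `‖x‖ = √(2 (Re x)² + (Ze x)²)` on the dual real numbers. -/
def dnorm (x : D2) : ℝ := Real.sqrt (2 * x.fst ^ 2 + x.snd ^ 2)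

/-- The type `θ` strict order `x >_θ y` (θ = 1 or θ = 2). -/
def dgt (θ : ℕ) (x y : D2) : Prop :=
  if θ = 1 then (y.fst < x.fst ∧ y.snd ≤ x.snd) ∨ (x.fst = y.fst ∧ y.snd < x.snd)
  else (y.fst < x.fst ∧ x.snd ≤ y.snd) ∨ (x.fst = y.fst ∧ x.snd < y.snd)

/-- `x ≥_θ y` means `x >_θ y` or `x = y`. -/
def dge (θ : ℕ) (x y : D2) : Prop := dgt θ x y ∨ x = y

/-- The type `θ` closed interval `[a, b]_θ`. -/
def dIcc (θ : ℕ) (a b : D2) : Set D2 := {x | dge θ x a ∧ dge θ b x}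

/-- The deleted type `θ` δ-neighborhood `N*_θ(c; δ)`. -/
def delNbd (θ : ℕ) (c : D2) (δ : ℝ) : Set D2 :=
  {x | 0 < dnorm (x - c) ∧ dnorm (x - c) < δ ∧ (dge θ x c ∨ dge θ c x)}

/-- A partition `a = x⁰ <_θ x¹ <_θ ⋯ <_θ xⁿ = b` of `[a, b]_θ`. -/
structure DPartition (θ : ℕ) (a b : D2) where
  n : ℕ
  npos : 0 < n
  x : ℕ → D2
  first : x 0 = a
  last : x n = b
  mono : ∀ i < n, dgt θ (x (i + 1)) (x i)

/-- The set of points of a partition. -/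
def DPartition.points {θ : ℕ} {a b : D2} (P : DPartition θ a b) : Set D2 :=
  P.x '' {i | i ≤ P.n}

/-- Supremum of the real component of `f` on `S`. -/
def reSup (f : D2 → D2) (S : Set D2) : ℝ := sSup ((fun x => (f x).fst) '' S)
/-- Infimum of the real component of `f` on `S`. -/
def reInf (f : D2 → D2) (S : Set D2) : ℝ := sInf ((fun x => (f x).fst) '' S)
/-- Supremum of the zero-divisor component of `f` on `S`. -/
def zeSup (f : D2 → D2) (S : Set D2) : ℝ := sSup ((fun x => (f x).snd) '' S)
/-- Infimum of the zero-divisor component of `f` on `S`. -/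
def zeInf (f : D2 → D2) (S : Set D2) : ℝ := sInf ((fun x => (f x).snd) '' S)

/-- The type `θ` upper sum `U_θ(P, f)`. -/
def upperSum (θ : ℕ) {a b : D2} (f : D2 → D2) (P : DPartition θ a b) : D2 :=
  ∑ i ∈ Finset.range P.n,
    (inl (reSup f (dIcc θ (P.x i) (P.x (i + 1)))) +
      inr (if θ = 1 then zeSup f (dIcc θ (P.x i) (P.x (i + 1)))
           else zeInf f (dIcc θ (P.x i) (P.x (i + 1))))) * (P.x (i + 1) - P.x i)

/-- The type `θ` lower sum `L_θ(P, f)`. -/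
def lowerSum (θ : ℕ) {a b : D2} (f : D2 → D2) (P : DPartition θ a b) : D2 :=
  ∑ i ∈ Finset.range P.n,
    (inl (reInf f (dIcc θ (P.x i) (P.x (i + 1)))) +
      inr (if θ = 1 then zeInf f (dIcc θ (P.x i) (P.x (i + 1)))
           else zeSup f (dIcc θ (P.x i) (P.x (i + 1))))) * (P.x (i + 1) - P.x i)

/-- The type `θ` lower integral of `f` on `[a, b]_θ`. -/
def lowerIntegral (θ : ℕ) (a b : D2) (f : D2 → D2) : D2 :=
  inl (sSup {r : ℝ | ∃ P : DPartition θ a b, (lowerSum θ f P).fst = r}) +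
  inr (if θ = 1 then sSup {r : ℝ | ∃ P : DPartition θ a b, (lowerSum θ f P).snd = r}
       else sInf {r : ℝ | ∃ P : DPartition θ a b, (lowerSum θ f P).snd = r})

/-- The type `θ` upper integral of `f` on `[a, b]_θ`. -/
def upperIntegral (θ : ℕ) (a b : D2) (f : D2 → D2) : D2 :=
  inl (sInf {r : ℝ | ∃ P : DPartition θ a b, (upperSum θ f P).fst = r}) +
  inr (if θ = 1 then sInf {r : ℝ | ∃ P : DPartition θ a b, (upperSum θ f P).snd = r}
       else sSup {r : ℝ | ∃ P : DPartition θ a b, (upperSum θ f P).snd = r})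

/-- `f` is type `θ` integrable on `[a, b]_θ`. -/
def DIntegrableOn (θ : ℕ) (a b : D2) (f : D2 → D2) : Prop :=
  lowerIntegral θ a b f = upperIntegral θ a b f

/-- The type `θ` integral `∫_a^b f d_θx` (the common value of the lower and upper integrals). -/
def dintegral (θ : ℕ) (a b : D2) (f : D2 → D2) : D2 := lowerIntegral θ a b f

/-- `f` is bounded on `S`: both real components are bounded. -/
def BddOn (f : D2 → D2) (S : Set D2) : Prop :=
  (∃ M : ℝ, ∀ x ∈ S, |(f x).fst| ≤ M) ∧ ∃ M : ℝ, ∀ x ∈ S, |(f x).snd| ≤ M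

/-- `f` is differentiable (dual number sense) at `c` relative to `S`, with derivative `L`. -/
def HasDDerivWithin (S : Set D2) (f : D2 → D2) (c L : D2) : Prop :=
  ∀ ε : ℝ, 0 < ε → ∃ δ : ℝ, 0 < δ ∧ ∀ x ∈ S, 0 < dnorm (x - c) → dnorm (x - c) < δ →
    dnorm (f x - f c - L * (x - c)) / dnorm (x - c) < ε

/-- `f : D → ℝ^(2)` is type `θ` differentiable at `c` with type `θ` derivative `L`. -/
def HasTypeDerivAt (θ : ℕ) (D : Set D2) (f : D2 → D2) (c L : D2) : Prop :=
  ∀ ε : ℝ, 0 < ε → ∃ δ : ℝ, 0 < δ ∧ delNbd θ c δ ⊆ D ∧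
    ∀ x ∈ delNbd θ c δ, dnorm (f x - f c - L * (x - c)) / dnorm (x - c) < ε

/-- `f` is type `θ` differentiable at `c` relative to `S`, with type `θ` derivative `L`. -/
def HasTypeDerivWithin (θ : ℕ) (S : Set D2) (f : D2 → D2) (c L : D2) : Prop :=
  ∀ ε : ℝ, 0 < ε → ∃ δ : ℝ, 0 < δ ∧
    ∀ x ∈ delNbd θ c δ ∩ S, dnorm (f x - f c - L * (x - c)) / dnorm (x - c) < ε
/-- the norm on dual real numbers is submultiplicative. -/
theorem dnorm_mul_le (x y : D2) : dnorm (x * y) ≤ dnorm x * dnorm y := by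
  unfold dnorm
  rw [← Real.sqrt_mul (by positivity)]
  apply Real.sqrt_le_sqrt
  simp only [fst_mul, snd_mul, smul_eq_mul, MulOpposite.smul_eq_mul_unop,
    MulOpposite.unop_op]
  nlinarith [sq_nonneg (x.fst * y.snd - x.snd * y.fst), sq_nonneg (x.fst*y.fst),
    sq_nonneg (x.snd*y.snd)]
end
end

section
/- For θ ∈ {1, 2}, if a function f : D → ℝ^(2) (D ⊆ ℝ^(2) open, c ∈ D) is type θ differentiable at c, then its type θ derivative at c is unique: if both L and L' satisfy the defining condition of the type θ derivative of f at c, then L = L'. -/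
open TrivSqZeroExt

noncomputable section

lemma dnorm_fst_le (u : D2) : |u.fst| * Real.sqrt 2 ≤ dnorm u := by
  have h1 : |u.fst| * Real.sqrt 2 = Real.sqrt (2 * u.fst ^ 2) := by
    rw [Real.sqrt_mul (by norm_num), Real.sqrt_sq_eq_abs]; ring
  rw [h1, dnorm]
  exact Real.sqrt_le_sqrt (by nlinarith [sq_nonneg u.snd])

lemma dnorm_snd_le (u : D2) : |u.snd| ≤ dnorm u := by
  have h1 : |u.snd| = Real.sqrt (u.snd ^ 2) := (Real.sqrt_sq_eq_abs _).symm
  rw [h1, dnorm]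
  exact Real.sqrt_le_sqrt (by nlinarith [sq_nonneg u.fst])

/-- uniqueness of the type θ derivative, for θ ∈ {1, 2}. -/
theorem typeDeriv_unique (θ : ℕ) (hθ : θ = 1 ∨ θ = 2) (D : Set D2) (hD : IsOpen D)
    (f : D2 → D2) (c : D2) (hc : c ∈ D) (L L' : D2)
    (hL : HasTypeDerivAt θ D f c L) (hL' : HasTypeDerivAt θ D f c L') : L = L' := by
  have hs2 : (0:ℝ) < Real.sqrt 2 := Real.sqrt_pos.mpr (by norm_num)
  have hs2lt : Real.sqrt 2 < 2 := by
    nlinarith [Real.sq_sqrt (by norm_num : (2:ℝ) ≥ 0)]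
  have key : ∀ ε : ℝ, 0 < ε →
      |L.fst - L'.fst| ≤ 2 * ε ∧ |L.snd - L'.snd| ≤ 2 * Real.sqrt 2 * ε := by
    intro ε hε
    obtain ⟨δ, hδ, hsub, hb⟩ := hL ε hε
    obtain ⟨δ', hδ', hsub', hb'⟩ := hL' ε hε
    set t : ℝ := min δ δ' / 2 with ht_def
    have ht : 0 < t := by positivity
    set x : D2 := c + inl t with hx_def
    have hxc : x - c = (inl t : D2) := by simp [hx_def]
    have hdn : dnorm (x - c) = t * Real.sqrt 2 := by
      rw [hxc]
      simp only [dnorm, fst_inl, snd_inl]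
      rw [show 2 * t ^ 2 + 0 ^ 2 = 2 * t ^ 2 by ring,
        Real.sqrt_mul (by norm_num), Real.sqrt_sq ht.le]
      ring
    have hdnpos : 0 < dnorm (x - c) := by rw [hdn]; positivity
    have hmem : ∀ d : ℝ, t * Real.sqrt 2 < d → x ∈ delNbd θ c d := by
      intro d hd
      refine ⟨hdnpos, by rw [hdn]; exact hd, Or.inl (Or.inl ?_)⟩
      rcases hθ with h | h <;> subst h <;>
        simp [dgt, hx_def, ht]
    have hlt : t * Real.sqrt 2 < min δ δ' := by
      have : t * Real.sqrt 2 < t * 2 := by nlinarith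
      calc t * Real.sqrt 2 < t * 2 := this
        _ = min δ δ' := by rw [ht_def]; ring
    have h1 := hb x (hmem δ (lt_of_lt_of_le hlt (min_le_left _ _)))
    have h2 := hb' x (hmem δ' (lt_of_lt_of_le hlt (min_le_right _ _)))
    set u : D2 := f x - f c - L * (x - c) with hu
    set v : D2 := f x - f c - L' * (x - c) with hv
    have hun : dnorm u < ε * (t * Real.sqrt 2) := by
      rw [div_lt_iff₀ hdnpos] at h1; rw [hdn] at h1; exact h1
    have hvn : dnorm v < ε * (t * Real.sqrt 2) := by
      rw [div_lt_iff₀ hdnpos] at h2; rw [hdn] at h2; exact h2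
    have hvu_fst : v.fst - u.fst = (L.fst - L'.fst) * t := by
      simp [hu, hv, hxc]; ring
    have hvu_snd : v.snd - u.snd = (L.snd - L'.snd) * t := by
      simp [hu, hv, hxc, smul_eq_mul]; ring
    have hufst := dnorm_fst_le u
    have hvfst := dnorm_fst_le v
    have husnd := dnorm_snd_le u
    have hvsnd := dnorm_snd_le v
    constructor
    · have hb1 : |(L.fst - L'.fst) * t| ≤ |v.fst| + |u.fst| := by
        rw [← hvu_fst]; exact abs_sub _ _
      rw [abs_mul, abs_of_pos ht] at hb1
      have : |L.fst - L'.fst| * t * Real.sqrt 2 ≤ 2 * ε * t * Real.sqrt 2 := by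
        nlinarith [abs_nonneg u.fst, abs_nonneg v.fst, abs_nonneg (L.fst - L'.fst)]
      nlinarith
    · have hb1 : |(L.snd - L'.snd) * t| ≤ |v.snd| + |u.snd| := by
        rw [← hvu_snd]; exact abs_sub _ _
      rw [abs_mul, abs_of_pos ht] at hb1
      nlinarith [abs_nonneg u.snd, abs_nonneg v.snd, abs_nonneg (L.snd - L'.snd)]
  have hfst : L.fst = L'.fst := by
    have : |L.fst - L'.fst| ≤ 0 := by
      refine le_of_forall_pos_le_add fun ε hε => ?_
      have := (key (ε / 2) (by positivity)).1
      linarith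
    have := abs_nonneg (L.fst - L'.fst)
    have : L.fst - L'.fst = 0 := abs_eq_zero.mp (le_antisymm ‹_› ‹_›)
    linarith
  have hsnd : L.snd = L'.snd := by
    have : |L.snd - L'.snd| ≤ 0 := by
      refine le_of_forall_pos_le_add fun ε hε => ?_
      have h := (key (ε / (2 * Real.sqrt 2)) (by positivity)).2
      have : 2 * Real.sqrt 2 * (ε / (2 * Real.sqrt 2)) = ε := by
        field_simp
      linarith [h, this.le]
    have := abs_nonneg (L.snd - L'.snd)
    have : L.snd - L'.snd = 0 := abs_eq_zero.mp (le_antisymm ‹_› ‹_›)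
    linarith
  exact TrivSqZeroExt.ext hfst hsnd
end
end

section
/- Let D ⊆ ℝ^(2) be open, f : D → ℝ^(2) with f(x₁ + x₂·1#) = u(x₁,x₂) + v(x₁,x₂)·1#, and c = c₁ + c₂·1# ∈ D. If the first-order partial derivatives u_{x₁}, u_{x₂}, v_{x₁}, v_{x₂} exist in a neighborhood of (c₁,c₂) and are continuous at (c₁,c₂), and u_{x₁}(c₁,c₂) = v_{x₂}(c₁,c₂) and u_{x₂}(c₁,c₂) = 0, then f is differentiable at c (in the dual number sense) with derivative f'(c) = u_{x₁}(c₁,c₂) + v_{x₁}(c₁,c₂)·1#. -/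
open TrivSqZeroExt

noncomputable section

lemma mvt_aux (w w' : ℝ → ℝ) (z r a ε' : ℝ) (hr : 0 < r)
    (hw : ∀ t ∈ Metric.ball z r, HasDerivAt w (w' t) t)
    (hb : ∀ t ∈ Metric.ball z r, |w' t - a| ≤ ε')
    (y : ℝ) (hy : |y - z| < r) :
    |w y - w z - a * (y - z)| ≤ ε' * |y - z| := by
  have h := Convex.norm_image_sub_le_of_norm_hasDerivWithin_le
    (f := fun t => w t - a * t) (f' := fun t => w' t - a) (s := Metric.ball z r)
    (C := ε')
    (fun t ht => (((hw t ht).sub (by simpa using (hasDerivAt_id t).const_mul a))).hasDerivWithinAt)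
    (fun t ht => hb t ht) (convex_ball z r) (Metric.mem_ball_self hr)
    (by simpa [Real.dist_eq] using hy)
  simp only [Real.norm_eq_abs] at h
  calc |w y - w z - a * (y - z)| = |(w y - a * y) - (w z - a * z)| := by congr 1; ring
  _ ≤ ε' * |y - z| := h


set_option maxHeartbeats 1000000 in
/-- sufficient condition for dual-number differentiability in terms of the
real component `u` and the zero-divisor component `v`. -/
theorem differentiable_of_partials (D : Set D2) (hD : IsOpen D) (f : D2 → D2)
    (u v : ℝ → ℝ → ℝ)
    (hf : ∀ x ∈ D, f x = inl (u x.fst x.snd) + inr (v x.fst x.snd))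
    (c : D2) (hc : c ∈ D)
    (ux₁ ux₂ vx₁ vx₂ : ℝ × ℝ → ℝ) (U : Set (ℝ × ℝ)) (hU : U ∈ nhds (c.fst, c.snd))
    (hu₁ : ∀ p ∈ U, HasDerivAt (fun t => u t p.2) (ux₁ p) p.1)
    (hu₂ : ∀ p ∈ U, HasDerivAt (fun t => u p.1 t) (ux₂ p) p.2)
    (hv₁ : ∀ p ∈ U, HasDerivAt (fun t => v t p.2) (vx₁ p) p.1)
    (hv₂ : ∀ p ∈ U, HasDerivAt (fun t => v p.1 t) (vx₂ p) p.2)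
    (hcont₁ : ContinuousAt ux₁ (c.fst, c.snd)) (hcont₂ : ContinuousAt ux₂ (c.fst, c.snd))
    (hcont₃ : ContinuousAt vx₁ (c.fst, c.snd)) (hcont₄ : ContinuousAt vx₂ (c.fst, c.snd))
    (heq₁ : ux₁ (c.fst, c.snd) = vx₂ (c.fst, c.snd)) (heq₂ : ux₂ (c.fst, c.snd) = 0) :
    HasDDerivWithin D f c (inl (ux₁ (c.fst, c.snd)) + inr (vx₁ (c.fst, c.snd))) := by
  intro ε hε
  set a := ux₁ (c.fst, c.snd) with ha
  set b := vx₁ (c.fst, c.snd) with hb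
  have hε' : (0:ℝ) < ε / 6 := by positivity
  -- a set in nhds where all four partials are close and inside U
  have hev : ∀ᶠ p in nhds (c.fst, c.snd), p ∈ U ∧ |ux₁ p - a| ≤ ε/6 ∧ |ux₂ p - 0| ≤ ε/6
      ∧ |vx₁ p - b| ≤ ε/6 ∧ |vx₂ p - a| ≤ ε/6 := by
    have e1 : ∀ᶠ p in nhds (c.fst, c.snd), |ux₁ p - a| ≤ ε/6 := by
      have := hcont₁.tendsto.eventually_mem (Metric.closedBall_mem_nhds a hε')
      filter_upwards [this] with p hp
      simpa [Metric.mem_closedBall, Real.dist_eq] using hp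
    have e2 : ∀ᶠ p in nhds (c.fst, c.snd), |ux₂ p - 0| ≤ ε/6 := by
      have := hcont₂.tendsto.eventually_mem
        (Metric.closedBall_mem_nhds (ux₂ (c.fst, c.snd)) hε')
      filter_upwards [this] with p hp
      rw [heq₂] at hp
      simpa [Metric.mem_closedBall, Real.dist_eq] using hp
    have e3 : ∀ᶠ p in nhds (c.fst, c.snd), |vx₁ p - b| ≤ ε/6 := by
      have := hcont₃.tendsto.eventually_mem (Metric.closedBall_mem_nhds b hε')
      filter_upwards [this] with p hp
      simpa [Metric.mem_closedBall, Real.dist_eq] using hp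
    have e4 : ∀ᶠ p in nhds (c.fst, c.snd), |vx₂ p - a| ≤ ε/6 := by
      have := hcont₄.tendsto.eventually_mem
        (Metric.closedBall_mem_nhds (vx₂ (c.fst, c.snd)) hε')
      filter_upwards [this] with p hp
      rw [← heq₁] at hp
      simpa [Metric.mem_closedBall, Real.dist_eq] using hp
    filter_upwards [hU, e1, e2, e3, e4] with p h0 h1 h2 h3 h4
    exact ⟨h0, h1, h2, h3, h4⟩
  obtain ⟨r, hr, hball⟩ := Metric.eventually_nhds_iff.mp hev
  refine ⟨r, hr, fun x hxD hpos hlt => ?_⟩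
  set h := x.fst - c.fst with hh
  set k := x.snd - c.snd with hk
  have hdn : dnorm (x - c) = Real.sqrt (2 * h ^ 2 + k ^ 2) := by
    simp [dnorm, hh, hk]
  rw [hdn] at hpos hlt
  have hsq : (0:ℝ) ≤ 2 * h ^ 2 + k ^ 2 := by positivity
  have habsh : |h| ≤ Real.sqrt (2 * h ^ 2 + k ^ 2) := by
    rw [← Real.sqrt_sq_eq_abs]
    exact Real.sqrt_le_sqrt (by nlinarith)
  have habsk : |k| ≤ Real.sqrt (2 * h ^ 2 + k ^ 2) := by
    rw [← Real.sqrt_sq_eq_abs]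
    exact Real.sqrt_le_sqrt (by nlinarith)
  have hhr : |h| < r := lt_of_le_of_lt habsh hlt
  have hkr : |k| < r := lt_of_le_of_lt habsk hlt
  -- membership helpers
  have mem1 : ∀ t ∈ Metric.ball c.fst r,
      (t, x.snd) ∈ U ∧ |ux₁ (t, x.snd) - a| ≤ ε/6 ∧ |ux₂ (t, x.snd) - 0| ≤ ε/6
        ∧ |vx₁ (t, x.snd) - b| ≤ ε/6 ∧ |vx₂ (t, x.snd) - a| ≤ ε/6 := by
    intro t ht
    apply hball
    rw [Prod.dist_eq]
    simp only [Real.dist_eq]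
    exact max_lt (by simpa [Real.dist_eq] using ht) (by simpa [hk] using hkr)
  have mem2 : ∀ t ∈ Metric.ball c.snd r,
      (c.fst, t) ∈ U ∧ |ux₁ (c.fst, t) - a| ≤ ε/6 ∧ |ux₂ (c.fst, t) - 0| ≤ ε/6
        ∧ |vx₁ (c.fst, t) - b| ≤ ε/6 ∧ |vx₂ (c.fst, t) - a| ≤ ε/6 := by
    intro t ht
    apply hball
    rw [Prod.dist_eq]
    simp only [Real.dist_eq]
    exact max_lt (by simp [hr]) (by simpa [Real.dist_eq] using ht)
  -- four MVT estimates
  have E1a : |u x.fst x.snd - u c.fst x.snd - a * h| ≤ ε/6 * |h| := by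
    have := mvt_aux (fun t => u t x.snd) (fun t => ux₁ (t, x.snd)) c.fst r a (ε/6) hr
      (fun t ht => hu₁ (t, x.snd) (mem1 t ht).1)
      (fun t ht => (mem1 t ht).2.1) x.fst (by simpa [hh] using hhr)
    simpa [hh] using this
  have E1b : |u c.fst x.snd - u c.fst c.snd - 0 * k| ≤ ε/6 * |k| := by
    have := mvt_aux (fun t => u c.fst t) (fun t => ux₂ (c.fst, t)) c.snd r 0 (ε/6) hr
      (fun t ht => hu₂ (c.fst, t) (mem2 t ht).1)
      (fun t ht => (mem2 t ht).2.2.1) x.snd (by simpa [hk] using hkr)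
    simpa [hk] using this
  have E2a : |v x.fst x.snd - v c.fst x.snd - b * h| ≤ ε/6 * |h| := by
    have := mvt_aux (fun t => v t x.snd) (fun t => vx₁ (t, x.snd)) c.fst r b (ε/6) hr
      (fun t ht => hv₁ (t, x.snd) (mem1 t ht).1)
      (fun t ht => (mem1 t ht).2.2.2.1) x.fst (by simpa [hh] using hhr)
    simpa [hh] using this
  have E2b : |v c.fst x.snd - v c.fst c.snd - a * k| ≤ ε/6 * |k| := by
    have := mvt_aux (fun t => v c.fst t) (fun t => vx₂ (c.fst, t)) c.snd r a (ε/6) hr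
      (fun t ht => hv₂ (c.fst, t) (mem2 t ht).1)
      (fun t ht => (mem2 t ht).2.2.2.2) x.snd (by simpa [hk] using hkr)
    simpa [hk] using this
  -- components of the error
  set E₁ := u x.fst x.snd - u c.fst c.snd - a * h with hE1
  set E₂ := v x.fst x.snd - v c.fst c.snd - (a * k + b * h) with hE2
  have hcomp : f x - f c - (inl a + inr b) * (x - c) = inl E₁ + inr E₂ := by
    rw [hf x hxD, hf c hc]
    ext
    · simp [hE1, hh]
    · simp [hE2, hh, hk, snd_mul]
  have hE1bound : |E₁| ≤ ε/6 * (|h| + |k|) := by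
    have : E₁ = (u x.fst x.snd - u c.fst x.snd - a * h)
        + (u c.fst x.snd - u c.fst c.snd - 0 * k) := by rw [hE1]; ring
    rw [this]
    calc _ ≤ |u x.fst x.snd - u c.fst x.snd - a * h| + |u c.fst x.snd - u c.fst c.snd - 0 * k| :=
          abs_add_le _ _
    _ ≤ ε/6 * |h| + ε/6 * |k| := add_le_add E1a E1b
    _ = ε/6 * (|h| + |k|) := by ring
  have hE2bound : |E₂| ≤ ε/6 * (|h| + |k|) := by
    have : E₂ = (v x.fst x.snd - v c.fst x.snd - b * h)
        + (v c.fst x.snd - v c.fst c.snd - a * k) := by rw [hE2]; ring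
    rw [this]
    calc _ ≤ |v x.fst x.snd - v c.fst x.snd - b * h| + |v c.fst x.snd - v c.fst c.snd - a * k| :=
          abs_add_le _ _
    _ ≤ ε/6 * |h| + ε/6 * |k| := add_le_add E2a E2b
    _ = ε/6 * (|h| + |k|) := by ring
  -- final estimate
  set M := ε/6 * (|h| + |k|) with hM
  have hM0 : 0 ≤ M := by positivity
  have hnum : dnorm (f x - f c - (inl a + inr b) * (x - c)) ≤ 2 * M := by
    rw [hcomp]
    have : dnorm (inl E₁ + inr E₂ : D2) = Real.sqrt (2 * E₁ ^ 2 + E₂ ^ 2) := by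
      simp [dnorm]
    rw [this]
    have h1 : E₁ ^ 2 ≤ M ^ 2 := by
      have := sq_abs E₁ ▸ pow_le_pow_left₀ (abs_nonneg E₁) hE1bound 2
      simpa [sq_abs] using this
    have h2 : E₂ ^ 2 ≤ M ^ 2 := by
      have := pow_le_pow_left₀ (abs_nonneg E₂) hE2bound 2
      simpa [sq_abs] using this
    calc Real.sqrt (2 * E₁ ^ 2 + E₂ ^ 2) ≤ Real.sqrt ((2 * M) ^ 2) :=
        Real.sqrt_le_sqrt (by nlinarith)
    _ = 2 * M := by rw [Real.sqrt_sq (by positivity)]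
  have hMd : M ≤ ε/6 * (2 * Real.sqrt (2 * h ^ 2 + k ^ 2)) := by
    rw [hM]
    have h2 : |h| + |k| ≤ 2 * Real.sqrt (2 * h ^ 2 + k ^ 2) := by linarith
    exact mul_le_mul_of_nonneg_left h2 (by positivity)
  rw [hdn, div_lt_iff₀ hpos]
  calc dnorm (f x - f c - (inl a + inr b) * (x - c)) ≤ 2 * M := hnum
  _ ≤ 2 * (ε/6 * (2 * Real.sqrt (2 * h ^ 2 + k ^ 2))) := by linarith
  _ < ε * Real.sqrt (2 * h ^ 2 + k ^ 2) := by nlinarith [mul_pos hε hpos]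
end
end

section
/- Let D ⊆ ℝ^(2) be open, f : D → ℝ^(2) with f(x₁ + x₂·1#) = u(x₁,x₂) + v(x₁,x₂)·1#, and c = c₁ + c₂·1# ∈ D. If f is differentiable at c (in the dual number sense), then the partial derivatives u_{x₁}, u_{x₂}, v_{x₁}, v_{x₂} exist at (c₁,c₂) and satisfy u_{x₁}(c₁,c₂) = v_{x₂}(c₁,c₂) and u_{x₂}(c₁,c₂) = 0, and the derivative is f'(c) = u_{x₁}(c₁,c₂) + v_{x₁}(c₁,c₂)·1#. -/
open TrivSqZeroExt

noncomputable section

lemma key_est (A B d ε : ℝ) (hd : 0 < d)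
    (h : Real.sqrt (2 * A ^ 2 + B ^ 2) / d < ε) :
    Real.sqrt 2 * |A| < ε * d ∧ |B| < ε * d := by
  have h' : Real.sqrt (2 * A ^ 2 + B ^ 2) < ε * d := (div_lt_iff₀ hd).1 h
  constructor
  · calc Real.sqrt 2 * |A| = Real.sqrt (2 * A ^ 2) := by
          rw [Real.sqrt_mul (by norm_num), Real.sqrt_sq_eq_abs]
      _ ≤ Real.sqrt (2 * A ^ 2 + B ^ 2) := Real.sqrt_le_sqrt (by nlinarith [sq_nonneg B])
      _ < ε * d := h'
  · calc |B| = Real.sqrt (B ^ 2) := (Real.sqrt_sq_eq_abs B).symm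
      _ ≤ Real.sqrt (2 * A ^ 2 + B ^ 2) := Real.sqrt_le_sqrt (by nlinarith [sq_nonneg A])
      _ < ε * d := h'

lemma aux_deriv (g : ℝ → ℝ) (a L : ℝ)
    (h : ∀ ε : ℝ, 0 < ε → ∃ δ : ℝ, 0 < δ ∧ ∀ t : ℝ, |t - a| < δ →
      |g t - g a - L * (t - a)| ≤ ε * |t - a|) :
    HasDerivAt g L a := by
  rw [hasDerivAt_iff_isLittleO, Asymptotics.isLittleO_iff]
  intro ε hε
  obtain ⟨δ, hδ, H⟩ := h ε hε
  rw [Metric.eventually_nhds_iff]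
  refine ⟨δ, hδ, fun {t} ht => ?_⟩
  have := H t (by simpa [Real.dist_eq] using ht)
  simpa [Real.norm_eq_abs, smul_eq_mul, mul_comm] using this

/-- necessity — if `f = u + v·1#` is dual-number differentiable at `c`
with derivative `L`, then all four partial derivatives exist at `(c₁, c₂)`, the equations
`u_{x₁} = v_{x₂}`, `u_{x₂} = 0` hold there, and `L = u_{x₁}(c₁,c₂) + v_{x₁}(c₁,c₂)·1#`
(i.e. `u_{x₁} = Re L`, `v_{x₁} = Ze L`, `v_{x₂} = Re L`, `u_{x₂} = 0` at `(c₁, c₂)`). -/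
theorem partials_of_differentiable (D : Set D2) (hD : IsOpen D) (f : D2 → D2)
    (u v : ℝ → ℝ → ℝ)
    (hf : ∀ x ∈ D, f x = inl (u x.fst x.snd) + inr (v x.fst x.snd))
    (c : D2) (hc : c ∈ D) (L : D2) (hL : HasDDerivWithin D f c L) :
    HasDerivAt (fun t => u t c.snd) L.fst c.fst ∧
    HasDerivAt (fun t => v t c.snd) L.snd c.fst ∧
    HasDerivAt (fun t => u c.fst t) 0 c.snd ∧
    HasDerivAt (fun t => v c.fst t) L.fst c.snd := by
  have hfc := hf c hc
  have s2pos : (0:ℝ) < Real.sqrt 2 := by positivity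
  have s2lt : Real.sqrt 2 < 2 := (Real.sqrt_lt' (by norm_num)).2 (by norm_num)
  have s2ge1 : (1:ℝ) ≤ Real.sqrt 2 := by
    rw [show (1:ℝ) = Real.sqrt 1 by simp]; exact Real.sqrt_le_sqrt (by norm_num)
  -- horizontal line membership
  have hcontH : Continuous (fun t : ℝ => (inl t + inr c.snd : D2)) :=
    TrivSqZeroExt.continuous_inl.add continuous_const
  have hcontV : Continuous (fun t : ℝ => (inl c.fst + inr t : D2)) :=
    Continuous.add continuous_const TrivSqZeroExt.continuous_inr
  obtain ⟨δH, hδH, hballH⟩ := Metric.isOpen_iff.1 (hcontH.isOpen_preimage D hD) c.fst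
    (by show inl c.fst + inr c.snd ∈ D; rw [inl_fst_add_inr_snd_eq]; exact hc)
  obtain ⟨δV, hδV, hballV⟩ := Metric.isOpen_iff.1 (hcontV.isOpen_preimage D hD) c.snd
    (by show inl c.fst + inr c.snd ∈ D; rw [inl_fst_add_inr_snd_eq]; exact hc)
  -- component formula
  have comp : ∀ x ∈ D,
      (f x - f c - L * (x - c)).fst
        = u x.fst x.snd - u c.fst c.snd - L.fst * (x.fst - c.fst) ∧
      (f x - f c - L * (x - c)).snd
        = v x.fst x.snd - v c.fst c.snd -
            (L.fst * (x.snd - c.snd) + (x.fst - c.fst) * L.snd) := by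
    intro x hx
    constructor
    · simp [hf x hx, hfc, smul_eq_mul]; try ring
    · simp [hf x hx, hfc, smul_eq_mul]; try ring
  -- Horizontal estimates
  have Hhoriz : ∀ ε : ℝ, 0 < ε → ∃ δ : ℝ, 0 < δ ∧ ∀ t : ℝ, |t - c.fst| < δ →
      |u t c.snd - u c.fst c.snd - L.fst * (t - c.fst)| ≤ ε * |t - c.fst| ∧
      |v t c.snd - v c.fst c.snd - L.snd * (t - c.fst)| ≤ ε * |t - c.fst| := by
    intro ε hε
    obtain ⟨δ₀, hδ₀, H⟩ := hL (ε / 2) (by positivity)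
    refine ⟨min δH (δ₀ / 2), by positivity, fun t ht => ?_⟩
    rcases eq_or_ne t c.fst with rfl | hne
    · simp
    set x : D2 := inl t + inr c.snd with hxdef
    have hxfst : x.fst = t := by simp [hxdef]
    have hxsnd : x.snd = c.snd := by simp [hxdef]
    have hxD : x ∈ D := hballH (by simpa [Real.dist_eq] using lt_of_lt_of_le ht (min_le_left _ _))
    have habs : 0 < |t - c.fst| := by
      simpa [sub_eq_zero] using abs_pos.mpr (sub_ne_zero.mpr hne)
    have hdn : dnorm (x - c) = Real.sqrt 2 * |t - c.fst| := by
      simp only [dnorm, hxdef]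
      rw [show ((inl t + inr c.snd : D2) - c).fst = t - c.fst by simp,
        show ((inl t + inr c.snd : D2) - c).snd = 0 by simp]
      rw [show (2 * (t - c.fst) ^ 2 + 0 ^ 2 : ℝ) = 2 * (t - c.fst) ^ 2 by ring,
        Real.sqrt_mul (by norm_num), Real.sqrt_sq_eq_abs]
    have hdnpos : 0 < dnorm (x - c) := by rw [hdn]; positivity
    have hdnlt : dnorm (x - c) < δ₀ := by
      rw [hdn]
      calc Real.sqrt 2 * |t - c.fst| < 2 * (δ₀ / 2) := by
            apply mul_lt_mul'' s2lt (lt_of_lt_of_le ht (min_le_right _ _)) (by positivity) (by positivity)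
        _ = δ₀ := by ring
    have hratio := H x hxD hdnpos hdnlt
    obtain ⟨hA, hB⟩ := comp x hxD
    rw [show dnorm (f x - f c - L * (x - c))
        = Real.sqrt (2 * (u t c.snd - u c.fst c.snd - L.fst * (t - c.fst)) ^ 2
          + (v t c.snd - v c.fst c.snd - L.snd * (t - c.fst)) ^ 2) by
        simp only [dnorm, hA, hB, hxfst, hxsnd]; ring_nf, hdn] at hratio
    obtain ⟨h1, h2⟩ := key_est _ _ _ _ (by positivity) hratio
    have key2 : ε / 2 * (Real.sqrt 2 * |t - c.fst|) ≤ ε * |t - c.fst| := by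
      have h1 : Real.sqrt 2 * |t - c.fst| ≤ 2 * |t - c.fst| :=
        mul_le_mul_of_nonneg_right (le_of_lt s2lt) (abs_nonneg _)
      calc ε / 2 * (Real.sqrt 2 * |t - c.fst|) ≤ ε / 2 * (2 * |t - c.fst|) :=
            mul_le_mul_of_nonneg_left h1 (by positivity)
        _ = ε * |t - c.fst| := by ring
    constructor
    · have hA' : |u t c.snd - u c.fst c.snd - L.fst * (t - c.fst)|
          ≤ Real.sqrt 2 * |u t c.snd - u c.fst c.snd - L.fst * (t - c.fst)| :=
        le_mul_of_one_le_left (abs_nonneg _) s2ge1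
      linarith [h1, hA', key2]
    · linarith [h2, key2]
  -- Vertical estimates
  have Hvert : ∀ ε : ℝ, 0 < ε → ∃ δ : ℝ, 0 < δ ∧ ∀ t : ℝ, |t - c.snd| < δ →
      |u c.fst t - u c.fst c.snd - 0 * (t - c.snd)| ≤ ε * |t - c.snd| ∧
      |v c.fst t - v c.fst c.snd - L.fst * (t - c.snd)| ≤ ε * |t - c.snd| := by
    intro ε hε
    obtain ⟨δ₀, hδ₀, H⟩ := hL ε hε
    refine ⟨min δV δ₀, by positivity, fun t ht => ?_⟩
    rcases eq_or_ne t c.snd with rfl | hne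
    · simp
    set x : D2 := inl c.fst + inr t with hxdef
    have hxfst : x.fst = c.fst := by simp [hxdef]
    have hxsnd : x.snd = t := by simp [hxdef]
    have hxD : x ∈ D := hballV (by simpa [Real.dist_eq] using lt_of_lt_of_le ht (min_le_left _ _))
    have habs : 0 < |t - c.snd| := abs_pos.mpr (sub_ne_zero.mpr hne)
    have hdn : dnorm (x - c) = |t - c.snd| := by
      simp only [dnorm, hxdef]
      rw [show ((inl c.fst + inr t : D2) - c).fst = 0 by simp,
        show ((inl c.fst + inr t : D2) - c).snd = t - c.snd by simp]
      rw [show (2 * (0:ℝ) ^ 2 + (t - c.snd) ^ 2 : ℝ) = (t - c.snd) ^ 2 by ring,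
        Real.sqrt_sq_eq_abs]
    have hdnpos : 0 < dnorm (x - c) := by rw [hdn]; exact habs
    have hdnlt : dnorm (x - c) < δ₀ := by
      rw [hdn]; exact lt_of_lt_of_le ht (min_le_right _ _)
    have hratio := H x hxD hdnpos hdnlt
    obtain ⟨hA, hB⟩ := comp x hxD
    rw [show dnorm (f x - f c - L * (x - c))
        = Real.sqrt (2 * (u c.fst t - u c.fst c.snd - 0 * (t - c.snd)) ^ 2
          + (v c.fst t - v c.fst c.snd - L.fst * (t - c.snd)) ^ 2) by
        simp only [dnorm, hA, hB, hxfst, hxsnd]; ring_nf, hdn] at hratio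
    obtain ⟨h1, h2⟩ := key_est _ _ _ _ habs hratio
    constructor
    · have hA' : |u c.fst t - u c.fst c.snd - 0 * (t - c.snd)|
          ≤ Real.sqrt 2 * |u c.fst t - u c.fst c.snd - 0 * (t - c.snd)| :=
        le_mul_of_one_le_left (abs_nonneg _) s2ge1
      linarith [h1]
    · exact le_of_lt h2
  refine ⟨aux_deriv _ _ _ ?_, aux_deriv _ _ _ ?_, aux_deriv _ _ _ ?_, aux_deriv _ _ _ ?_⟩
  · intro ε hε; obtain ⟨δ, hδ, H⟩ := Hhoriz ε hε
    exact ⟨δ, hδ, fun t ht => (H t ht).1⟩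
  · intro ε hε; obtain ⟨δ, hδ, H⟩ := Hhoriz ε hε
    exact ⟨δ, hδ, fun t ht => (H t ht).2⟩
  · intro ε hε; obtain ⟨δ, hδ, H⟩ := Hvert ε hε
    exact ⟨δ, hδ, fun t ht => (H t ht).1⟩
  · intro ε hε; obtain ⟨δ, hδ, H⟩ := Hvert ε hε
    exact ⟨δ, hδ, fun t ht => (H t ht).2⟩
end
end

section
/- Let θ ∈ {1, 2}, a <_θ b in ℝ^(2), and f : [a,b]_θ → ℝ^(2) bounded. If P and P* are partitions of [a,b]_θ and P* is a refinement of P (P ⊆ P*), then L_θ(P,f) ≤_θ L_θ(P*,f) ≤_θ U_θ(P*,f) ≤_θ U_θ(P,f). -/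
open TrivSqZeroExt

noncomputable section

/-! In the coordinates `(Re x, Ze x)` for `θ = 1` and `(Re x, -Ze x)` for `θ = 2`, the order `≥_θ`
is the product order of `ℝ²`, and the cone `{x | x ≥_θ 0}` is closed under multiplication.
Refining `P` splits each `Δx^(i)` into the increments `Δx*^(j)` of `P*` inside it, so
`L_θ(P*, f) - L_θ(P, f)` is a sum of products `(c*_j - c_i) Δx*^(j)` of two θ-nonnegative
factors: the increments because `P*` is θ-increasing, the coefficient differences because on a
smaller interval infima are larger and suprema smaller. Upper sums behave symmetrically, and
`L_θ(P*, f) ≤_θ U_θ(P*, f)` holds term by term. -/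

open Finset

/-- `≥_θ` is the product order of `ℝ × ℝ` in these coordinates. -/
def thetaCoords (θ : ℕ) (x : D2) : ℝ × ℝ := (x.fst, if θ = 1 then x.snd else -x.snd)

variable {θ : ℕ}

lemma thetaCoords_injective : Function.Injective (thetaCoords θ) := by
  intro x y h
  simp only [thetaCoords, Prod.mk.injEq] at h
  split_ifs at h <;> exact TrivSqZeroExt.ext h.1 (by linarith)

lemma thetaCoords_sub (x y : D2) : thetaCoords θ (x - y) = thetaCoords θ x - thetaCoords θ y := by
  simp only [thetaCoords, TrivSqZeroExt.fst_sub, TrivSqZeroExt.snd_sub, Prod.mk_sub_mk]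
  split_ifs <;> simp only [neg_sub_neg, neg_sub']

lemma dgt_iff_thetaCoords_lt {x y : D2} : dgt θ x y ↔ thetaCoords θ y < thetaCoords θ x := by
  simp only [dgt, thetaCoords, Prod.lt_iff]
  split_ifs <;> grind

lemma dge_iff_thetaCoords_le {x y : D2} : dge θ x y ↔ thetaCoords θ y ≤ thetaCoords θ x := by
  rw [dge, dgt_iff_thetaCoords_lt, le_iff_lt_or_eq, thetaCoords_injective.eq_iff, eq_comm]

lemma dIcc_eq_preimage (a b : D2) :
    dIcc θ a b = thetaCoords θ ⁻¹' Set.Icc (thetaCoords θ a) (thetaCoords θ b) := by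
  ext x
  simp only [dIcc, Set.mem_ofPred_eq, Set.mem_preimage, Set.mem_Icc, dge_iff_thetaCoords_le]

def thetaNonneg (θ : ℕ) : Subsemiring D2 where
  carrier := {x | 0 ≤ thetaCoords θ x}
  zero_mem' := by simp [thetaCoords, Prod.le_def]
  one_mem' := by simp [thetaCoords, Prod.le_def]
  add_mem' := by
    intro x y hx hy
    simp only [Set.mem_ofPred_eq, thetaCoords, Prod.le_def, Prod.fst_zero, Prod.snd_zero,
      TrivSqZeroExt.fst_add, TrivSqZeroExt.snd_add] at *
    split_ifs at * <;> constructor <;> linarith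
  mul_mem' := by
    intro x y hx hy
    simp only [Set.mem_ofPred_eq, thetaCoords, Prod.le_def, Prod.fst_zero, Prod.snd_zero,
      TrivSqZeroExt.fst_mul, TrivSqZeroExt.snd_mul, smul_eq_mul, op_smul_eq_mul] at *
    split_ifs at * <;> constructor <;> nlinarith

lemma mem_thetaNonneg {x : D2} : x ∈ thetaNonneg θ ↔ 0 ≤ thetaCoords θ x := Iff.rfl

lemma dge_iff_sub_mem {x y : D2} : dge θ x y ↔ x - y ∈ thetaNonneg θ := by
  rw [dge_iff_thetaCoords_le, mem_thetaNonneg, thetaCoords_sub, sub_nonneg]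

lemma inl_add_inr_sub_mem_thetaNonneg {r s r' s' : ℝ} :
    (inl r + inr s : D2) - (inl r' + inr s') ∈ thetaNonneg θ ↔
      r' ≤ r ∧ if θ = 1 then s' ≤ s else s ≤ s' := by
  simp only [mem_thetaNonneg, thetaCoords, Prod.le_def, Prod.fst_zero, Prod.snd_zero,
    TrivSqZeroExt.fst_sub, TrivSqZeroExt.snd_sub, TrivSqZeroExt.fst_add, TrivSqZeroExt.snd_add,
    TrivSqZeroExt.fst_inl, TrivSqZeroExt.snd_inl, TrivSqZeroExt.fst_inr, TrivSqZeroExt.snd_inr,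
    zero_add, add_zero, sub_nonneg]
  split_ifs <;> simp only [sub_nonneg, neg_nonneg, sub_nonpos]

theorem sum_refinement_sub_mem {R : Type*} [Ring R] (C : Subsemiring R) {m : ℕ} {σ : ℕ → ℕ}
    (hσ : MonotoneOn σ (Set.Iic m)) (x y c d : ℕ → R) (hxy : ∀ i ≤ m, y (σ i) = x i)
    (hy : ∀ j ∈ Ico (σ 0) (σ m), y (j + 1) - y j ∈ C)
    (hcd : ∀ i < m, ∀ j ∈ Ico (σ i) (σ (i + 1)), d j - c i ∈ C) :
    ∑ j ∈ Ico (σ 0) (σ m), d j * (y (j + 1) - y j) -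
      ∑ i ∈ range m, c i * (x (i + 1) - x i) ∈ C := by
  induction m with
  | zero => simp
  | succ m ih =>
    have hσ0 : σ 0 ≤ σ m := hσ (by simp) (by simp) (Nat.zero_le m)
    have hσm : σ m ≤ σ (m + 1) := hσ (by simp) (by simp) (Nat.le_succ m)
    have hblock : c m * (x (m + 1) - x m) =
        ∑ j ∈ Ico (σ m) (σ (m + 1)), c m * (y (j + 1) - y j) := by
      rw [← mul_sum, sum_Ico_sub y hσm, hxy m (Nat.le_succ m), hxy (m + 1) le_rfl]
    rw [← sum_Ico_consecutive _ hσ0 hσm, sum_range_succ, hblock, add_sub_add_comm,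
      ← sum_sub_distrib]
    refine add_mem (ih (hσ.mono (Set.Iic_subset_Iic.2 (Nat.le_succ m)))
      (fun i hi => hxy i (Nat.le_succ_of_le hi)) (fun j hj => hy j ?_)
      fun i hi => hcd i (Nat.lt_succ_of_lt hi)) (sum_mem fun j hj => ?_)
    · simp only [mem_Ico] at hj ⊢; omega
    · rw [← sub_mul]
      refine mul_mem (hcd m (Nat.lt_succ_self m) j hj) (hy j ?_)
      simp only [mem_Ico] at hj ⊢; omega

namespace DPartition

variable {a b : D2} (P Q : DPartition θ a b)

lemma strictMonoOn : StrictMonoOn (thetaCoords θ ∘ P.x) (Set.Iic P.n) :=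
  strictMonoOn_Iic_of_lt_succ fun i hi => dgt_iff_thetaCoords_lt.1 (P.mono i hi)

lemma dIcc_subset_dIcc {i j k l : ℕ} (hik : i ≤ k) (hkl : k ≤ l) (hlj : l ≤ j) (hj : j ≤ P.n) :
    dIcc θ (P.x k) (P.x l) ⊆ dIcc θ (P.x i) (P.x j) := by
  have hmono := P.strictMonoOn.monotoneOn
  have hl : l ≤ P.n := hlj.trans hj
  simp only [dIcc_eq_preimage]
  exact Set.preimage_mono (Set.Icc_subset_Icc (hmono (hik.trans (hkl.trans hl)) (hkl.trans hl) hik)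
    (hmono hl hj hlj))

lemma dIcc_subset {k l : ℕ} (hkl : k ≤ l) (hl : l ≤ P.n) : dIcc θ (P.x k) (P.x l) ⊆ dIcc θ a b := by
  simpa only [P.first, P.last] using P.dIcc_subset_dIcc (Nat.zero_le k) hkl hl le_rfl

lemma left_mem_dIcc {k l : ℕ} (hkl : k ≤ l) (hl : l ≤ P.n) : P.x k ∈ dIcc θ (P.x k) (P.x l) := by
  rw [dIcc_eq_preimage]
  exact ⟨le_rfl, P.strictMonoOn.monotoneOn (hkl.trans hl) hl hkl⟩

lemma sub_mem_thetaNonneg {j : ℕ} (hj : j < P.n) : P.x (j + 1) - P.x j ∈ thetaNonneg θ :=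
  dge_iff_sub_mem.1 (Or.inl (P.mono j hj))

variable {P Q} in
lemma exists_indexMap (h : P.points ⊆ Q.points) :
    ∃ σ : ℕ → ℕ, MonotoneOn σ (Set.Iic P.n) ∧ σ 0 = 0 ∧ σ P.n = Q.n ∧
      ∀ i ≤ P.n, Q.x (σ i) = P.x i := by
  have hex : ∀ i ≤ P.n, ∃ j ≤ Q.n, Q.x j = P.x i := fun i hi => h ⟨i, hi, rfl⟩
  choose! σ hσ using hex
  have hσ_eq {i j : ℕ} (hi : i ≤ P.n) (hj : j ≤ Q.n) (hx : Q.x j = P.x i) : σ i = j :=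
    Q.strictMonoOn.injOn (hσ i hi).1 hj (by simp only [Function.comp_apply, (hσ i hi).2, hx])
  refine ⟨σ, fun i hi i' hi' hii' => ?_,
    hσ_eq (Nat.zero_le _) (Nat.zero_le _) (by rw [P.first, Q.first]),
    hσ_eq le_rfl le_rfl (by rw [P.last, Q.last]), fun i hi => (hσ i hi).2⟩
  refine (Q.strictMonoOn.le_iff_le (hσ i hi).1 (hσ i' hi').1).1 ?_
  simpa only [Function.comp_apply, (hσ i hi).2, (hσ i' hi').2] using
    P.strictMonoOn.monotoneOn hi hi' hii'

end DPartition

lemma BddOn.mono {f : D2 → D2} {S T : Set D2} (hT : BddOn f T) (hST : S ⊆ T) : BddOn f S :=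
  ⟨hT.1.imp fun _ hM x hx => hM x (hST hx), hT.2.imp fun _ hM x hx => hM x (hST hx)⟩

lemma BddOn.isBounded_image_fst {f : D2 → D2} {S : Set D2} (h : BddOn f S) :
    Bornology.IsBounded ((fun x => (f x).fst) '' S) :=
  isBounded_iff_forall_norm_le.2 (by simpa only [Set.forall_mem_image, Real.norm_eq_abs] using h.1)

lemma BddOn.isBounded_image_snd {f : D2 → D2} {S : Set D2} (h : BddOn f S) :
    Bornology.IsBounded ((fun x => (f x).snd) '' S) :=
  isBounded_iff_forall_norm_le.2 (by simpa only [Set.forall_mem_image, Real.norm_eq_abs] using h.2)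

def lowerCoef (θ : ℕ) (f : D2 → D2) (S : Set D2) : D2 :=
  inl (reInf f S) + inr (if θ = 1 then zeInf f S else zeSup f S)

def upperCoef (θ : ℕ) (f : D2 → D2) (S : Set D2) : D2 :=
  inl (reSup f S) + inr (if θ = 1 then zeSup f S else zeInf f S)

section Coef

variable {f : D2 → D2} {S T : Set D2}

lemma lowerCoef_sub_mem (hT : BddOn f T) (hS : S.Nonempty) (hST : S ⊆ T) :
    lowerCoef θ f S - lowerCoef θ f T ∈ thetaNonneg θ := by
  have hre : reInf f T ≤ reInf f S :=
    csInf_le_csInf hT.isBounded_image_fst.bddBelow (hS.image _) (Set.image_mono hST)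
  have hzeInf : zeInf f T ≤ zeInf f S :=
    csInf_le_csInf hT.isBounded_image_snd.bddBelow (hS.image _) (Set.image_mono hST)
  have hzeSup : zeSup f S ≤ zeSup f T :=
    csSup_le_csSup hT.isBounded_image_snd.bddAbove (hS.image _) (Set.image_mono hST)
  rw [lowerCoef, lowerCoef, inl_add_inr_sub_mem_thetaNonneg]
  exact ⟨hre, by split_ifs <;> assumption⟩

lemma upperCoef_sub_mem (hT : BddOn f T) (hS : S.Nonempty) (hST : S ⊆ T) :
    upperCoef θ f T - upperCoef θ f S ∈ thetaNonneg θ := by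
  have hre : reSup f S ≤ reSup f T :=
    csSup_le_csSup hT.isBounded_image_fst.bddAbove (hS.image _) (Set.image_mono hST)
  have hzeInf : zeInf f T ≤ zeInf f S :=
    csInf_le_csInf hT.isBounded_image_snd.bddBelow (hS.image _) (Set.image_mono hST)
  have hzeSup : zeSup f S ≤ zeSup f T :=
    csSup_le_csSup hT.isBounded_image_snd.bddAbove (hS.image _) (Set.image_mono hST)
  rw [upperCoef, upperCoef, inl_add_inr_sub_mem_thetaNonneg]
  exact ⟨hre, by split_ifs <;> assumption⟩

lemma upperCoef_sub_lowerCoef_mem (hS : BddOn f S) (hne : S.Nonempty) :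
    upperCoef θ f S - lowerCoef θ f S ∈ thetaNonneg θ := by
  have hre : reInf f S ≤ reSup f S :=
    csInf_le_csSup (hne.image _) hS.isBounded_image_fst.bddBelow hS.isBounded_image_fst.bddAbove
  have hze : zeInf f S ≤ zeSup f S :=
    csInf_le_csSup (hne.image _) hS.isBounded_image_snd.bddBelow hS.isBounded_image_snd.bddAbove
  rw [lowerCoef, upperCoef, inl_add_inr_sub_mem_thetaNonneg]
  exact ⟨hre, by split_ifs <;> assumption⟩

end Coef

namespace DPartition

variable {a b : D2}

def coefSum (P : DPartition θ a b) (κ : Set D2 → D2) : D2 :=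
  ∑ i ∈ range P.n, κ (dIcc θ (P.x i) (P.x (i + 1))) * (P.x (i + 1) - P.x i)

lemma coefSum_sub_coefSum_mem_of_points_subset {P Q : DPartition θ a b} (h : P.points ⊆ Q.points)
    {κ : Set D2 → D2}
    (hκ : ∀ S T, S.Nonempty → S ⊆ T → T ⊆ dIcc θ a b → κ S - κ T ∈ thetaNonneg θ) :
    Q.coefSum κ - P.coefSum κ ∈ thetaNonneg θ := by
  obtain ⟨σ, hσ, hσ0, hσn, hQP⟩ := exists_indexMap h
  have hQ := sum_refinement_sub_mem (thetaNonneg θ) hσ P.x Q.x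
    (fun i => κ (dIcc θ (P.x i) (P.x (i + 1)))) (fun j => κ (dIcc θ (Q.x j) (Q.x (j + 1)))) hQP
    (fun j hj => Q.sub_mem_thetaNonneg (by simp only [mem_Ico, hσn] at hj; exact hj.2))
    fun i hi j hj => by
      have hi' : σ (i + 1) ≤ Q.n := hσn ▸ hσ hi Set.self_mem_Iic hi
      rw [mem_Ico] at hj
      rw [← hQP i hi.le, ← hQP (i + 1) hi]
      exact hκ _ _ ⟨_, Q.left_mem_dIcc j.le_succ (by omega)⟩
        (Q.dIcc_subset_dIcc hj.1 j.le_succ hj.2 hi') (Q.dIcc_subset (by omega) hi')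
  rwa [hσ0, hσn, ← range_eq_Ico] at hQ

lemma lowerSum_eq_coefSum (f : D2 → D2) (P : DPartition θ a b) :
    lowerSum θ f P = P.coefSum (lowerCoef θ f) := rfl

lemma upperSum_eq_coefSum (f : D2 → D2) (P : DPartition θ a b) :
    upperSum θ f P = P.coefSum (upperCoef θ f) := rfl

lemma coefSum_neg (P : DPartition θ a b) (κ : Set D2 → D2) :
    P.coefSum (fun S => -κ S) = -P.coefSum κ := by
  simp only [coefSum, neg_mul, sum_neg_distrib]

lemma coefSum_sub_coefSum_mem {P : DPartition θ a b} {κ κ' : Set D2 → D2}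
    (hκ : ∀ S, S.Nonempty → S ⊆ dIcc θ a b → κ' S - κ S ∈ thetaNonneg θ) :
    P.coefSum κ' - P.coefSum κ ∈ thetaNonneg θ := by
  rw [coefSum, coefSum, ← sum_sub_distrib]
  refine sum_mem fun i hi => ?_
  rw [mem_range] at hi
  rw [← sub_mul]
  exact mul_mem (hκ _ ⟨_, P.left_mem_dIcc i.le_succ hi⟩ (P.dIcc_subset i.le_succ hi))
    (P.sub_mem_thetaNonneg hi)

end DPartition

theorem sums_refinement_general (θ : ℕ) (a b : D2)
    (f : D2 → D2) (hf : BddOn f (dIcc θ a b))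
    (P Pstar : DPartition θ a b) (href : P.points ⊆ Pstar.points) :
    dge θ (lowerSum θ f Pstar) (lowerSum θ f P) ∧
    dge θ (upperSum θ f Pstar) (lowerSum θ f Pstar) ∧
    dge θ (upperSum θ f P) (upperSum θ f Pstar) := by
  simp only [dge_iff_sub_mem, DPartition.lowerSum_eq_coefSum, DPartition.upperSum_eq_coefSum]
  refine ⟨?_, ?_, ?_⟩
  · exact DPartition.coefSum_sub_coefSum_mem_of_points_subset href fun S T hS hST hT =>
      lowerCoef_sub_mem (hf.mono hT) hS hST
  · exact DPartition.coefSum_sub_coefSum_mem fun S hS hSab =>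
      upperCoef_sub_lowerCoef_mem (hf.mono hSab) hS
  · have h := DPartition.coefSum_sub_coefSum_mem_of_points_subset href
      (κ := fun S => -upperCoef θ f S) fun S T hS hST hT => by
        simpa only [neg_sub_neg] using upperCoef_sub_mem (hf.mono hT) hS hST
    rwa [DPartition.coefSum_neg, DPartition.coefSum_neg, neg_sub_neg] at h

/-- refining a partition raises lower sums and lowers upper sums:
`L_θ(P,f) ≤_θ L_θ(P*,f) ≤_θ U_θ(P*,f) ≤_θ U_θ(P,f)`. -/
theorem sums_refinement (θ : ℕ) (hθ : θ = 1 ∨ θ = 2) (a b : D2) (hab : dgt θ b a)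
    (f : D2 → D2) (hf : BddOn f (dIcc θ a b))
    (P Pstar : DPartition θ a b) (href : P.points ⊆ Pstar.points) :
    dge θ (lowerSum θ f Pstar) (lowerSum θ f P) ∧
    dge θ (upperSum θ f Pstar) (lowerSum θ f Pstar) ∧
    dge θ (upperSum θ f P) (upperSum θ f Pstar) :=
  sums_refinement_general θ a b f hf P Pstar href
end
end
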